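/- Let R be an algebra of type (𝒢, m, n) with no exotic products, and let D₁, D₂, D₃ be pairwise disjoint finite sets of positive integers such that D₁ ∪ D₃ and D₂ ∪ D₃ are subgees. Then the product V̄_{D₁} V̄_{D₂} V̄_{D₃} · (W_{D₁∪D₃}⊗1 − 1⊗W_{D₁∪D₃}) · (W_{D₂∪D₃}⊗1 − 1⊗W_{D₂∪D₃}) is nonzero in R ⊗̂ R if and only if |D₁| + |D₂| + |D₃| ≡ m (mod 2). -/

import Mathlib

open scoped TensorProduct

/-- `[k] = {1,…,k}` as a finset of positive integers. -/
def bra (k : ℕ) : Finset ℕ+ := (Finset.range k).image (fun i => ⟨i + 1, i.succ_pos⟩)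

/-- The domination order on finite multisets of positive integers: `MLE S T` holds iff there
is a submultiset `T'` of `T` that can be matched up with `S` so that each element of `S` is
at most its partner in `T'`. -/
def MLE (S T : Multiset ℕ+) : Prop := ∃ T' ≤ T, Multiset.Rel (· ≤ ·) S T'

/-- `S` is a subgee of the collection `𝒢` of gees. -/
def Subgee (𝒢 : Finset (Finset ℕ+)) (S : Finset ℕ+) : Prop := ∃ G ∈ 𝒢, MLE S.val G.val

/-- `rho i T` is the number of elements of `T` greater than `i`. -/
def rho (i : ℕ+) (T : Finset ℕ+) : ℕ := (T.filter (fun t => i < t)).card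

/-- The ordered monomial `V_S = V_{s₁} ⋯ V_{s_k}` for `S = {s₁ < ⋯ < s_k}`. -/
def VSmon {R : Type} [Ring R] (V : ℕ+ → R) (S : Finset ℕ+) : R :=
  ((S.sort (· ≤ ·)).map V).prod

/-- An algebra of type `(𝒢, m, n)`. -/
structure IsPolygonAlgebra (n m : ℕ) (𝒢 : Finset (Finset ℕ+))
    (R : Type) [Ring R] [Algebra ℚ R] [FiniteDimensional ℚ R]
    (𝒜 : ℕ → Submodule ℚ R) [GradedAlgebra 𝒜]
    (V : ℕ+ → R) (W : Finset ℕ+ → R) : Prop where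
  hn : 4 ≤ n
  hm : 1 ≤ m
  gee_nonempty : 𝒢.Nonempty
  gee_sub : ∀ G ∈ 𝒢, G ⊆ bra (n - 1)
  gee_incomp : ∀ G ∈ 𝒢, ∀ G' ∈ 𝒢, MLE G.val G'.val → G = G'
  gee_card : ∀ G ∈ 𝒢, G.card ≤ m - 1
  gcomm : ∀ (i j : ℕ) (x y : R), x ∈ 𝒜 i → y ∈ 𝒜 j →
    x * y = ((-1 : ℚ)) ^ (i * j) • (y * x)
  V_mem : ∀ i : ℕ+, (i : ℕ) ≤ n - 1 → V i ∈ 𝒜 1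
  W_mem : ∀ S : Finset ℕ+, Subgee 𝒢 S → W S ∈ 𝒜 (m - S.card)
  VS_ne : ∀ S : Finset ℕ+, S ⊆ bra (n - 1) → (VSmon V S ≠ 0 ↔ Subgee 𝒢 S)
  basis_indep : LinearIndependent ℚ
    (Sum.elim (fun S : {S : Finset ℕ+ // Subgee 𝒢 S} => VSmon V S.1)
      (fun S : {S : Finset ℕ+ // Subgee 𝒢 S} => W S.1))
  basis_span : Submodule.span ℚ (Set.range
    (Sum.elim (fun S : {S : Finset ℕ+ // Subgee 𝒢 S} => VSmon V S.1)
      (fun S : {S : Finset ℕ+ // Subgee 𝒢 S} => W S.1))) = ⊤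
  VW : ∀ S S' : Finset ℕ+, Subgee 𝒢 S → Subgee 𝒢 S' → S.card = S'.card →
    VSmon V S * W S' = if S = S' then W ∅ else 0
  WW : ∀ S S' : Finset ℕ+, Subgee 𝒢 S → Subgee 𝒢 S' → S.card + S'.card = m →
    W S * W S' = 0

/-- `R` has no exotic products. -/
def NoExoticProducts (n : ℕ) (𝒢 : Finset (Finset ℕ+))
    {R : Type} [Ring R] [Algebra ℚ R] (V : ℕ+ → R) (W : Finset ℕ+ → R) : Prop :=
  (∀ S S' : Finset ℕ+, Subgee 𝒢 S → Subgee 𝒢 S' → W S * W S' = 0) ∧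
  (∀ i : ℕ+, (i : ℕ) ≤ n - 1 → ∀ S : Finset ℕ+, Subgee 𝒢 S →
    (i ∈ S → V i * W S = ((-1 : ℚ)) ^ (rho i (S.erase i)) • W (S.erase i)) ∧
    (i ∉ S → V i * W S = 0))

section Tensor

variable {R : Type} [Ring R] [Algebra ℚ R] (𝒜 : ℕ → Submodule ℚ R) [GradedAlgebra 𝒜]

/-- The multiplication map `μ : R ⊗̂ R → R`. -/
noncomputable def muMap : (𝒜 ᵍ⊗[ℚ] 𝒜) →ₗ[ℚ] R :=
  (LinearMap.mul' ℚ R).comp (GradedTensorProduct.of ℚ 𝒜 𝒜).symm.toLinearMap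

/-- `x ⊗ y` as an element of the graded tensor product `R ⊗̂ R`. -/
noncomputable def tm (x y : R) : 𝒜 ᵍ⊗[ℚ] 𝒜 := GradedTensorProduct.of ℚ 𝒜 𝒜 (x ⊗ₜ y)

/-- `ū = u ⊗ 1 - 1 ⊗ u`. -/
noncomputable def ubar (u : R) : 𝒜 ᵍ⊗[ℚ] 𝒜 := tm 𝒜 u 1 - tm 𝒜 1 u

/-- `V̄_D = ∏_{i ∈ D} V̄ᵢ` with factors in increasing order of `i`. -/
noncomputable def Vbar (V : ℕ+ → R) (D : Finset ℕ+) : 𝒜 ᵍ⊗[ℚ] 𝒜 :=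
  ((D.sort (· ≤ ·)).map (fun i => ubar 𝒜 (V i))).prod

/-- The set of `k` such that some product of `k` zero divisors in `R ⊗̂ R` is nonzero;
`zcl R` is the greatest element of this set. -/
def zclSet : Set ℕ :=
  {k : ℕ | ∃ L : List (𝒜 ᵍ⊗[ℚ] 𝒜), L.length = k ∧
    (∀ x ∈ L, muMap 𝒜 x = 0) ∧ L.prod ≠ 0}

end Tensor

/-!
In `R ⊗̂ R` all products of two `W`'s vanish, so with `A = D₁ ∪ D₃`, `B = D₂ ∪ D₃` one has
`W̄_A W̄_B = -(W_A ⊗ W_B) - (-1)^{|W_A||W_B|} W_B ⊗ W_A`. With no exotic products `V_j` acts on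
the `W`'s as the contraction `W_S ↦ ± W_{S ∖ j}`, so `V̄_j = V_j ⊗ 1 - 1 ⊗ V_j` contracts `j`
out of one of the two tensor factors, with a Koszul sign. Applying `V̄_{D₃}`, `V̄_{D₂}`, `V̄_{D₁}`
to each of the two tensors leaves, for every `E ⊆ D₃`, a signed copy of `W_E ⊗ W_{D₃ ∖ E}`, and
counting inversions modulo 2 shows that the two signs belonging to `E` always differ by
`(-1)^{|D₁|+|D₂|+|D₃|+m}`. So the product is `-(1 + (-1)^{|D₁|+|D₂|+|D₃|+m})` times a sum
whose coordinate at `W_∅ ⊗ W_{D₃}` is `±1`.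
-/

open Finset

section Combinatorics

lemma rho_union {j : ℕ+} {S T : Finset ℕ+} (h : Disjoint S T) :
    rho j (S ∪ T) = rho j S + rho j T := by
  rw [rho, filter_union, card_union_of_disjoint (disjoint_filter_filter h)]
  rfl

lemma rho_insert_of_le {j k : ℕ+} (h : j ≤ k) (X : Finset ℕ+) :
    rho k (insert j X) = rho k X := by
  rw [rho, filter_insert, if_neg (not_lt.mpr h)]
  rfl

lemma rho_sdiff_insert_of_le {j k : ℕ+} (h : j ≤ k) (S F : Finset ℕ+) :
    rho k (S \ insert j F) = rho k (S \ F) := by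
  rw [sdiff_insert, rho, rho, filter_erase, erase_eq_of_notMem]
  simp [h]

lemma rho_eq_card {j : ℕ+} {X : Finset ℕ+} (h : ∀ x ∈ X, j < x) : rho j X = #X := by
  rw [rho, filter_true_of_mem h]

def ltPairs (X Y : Finset ℕ+) : ℕ := ∑ j ∈ X, rho j Y

lemma ltPairs_empty_left (Y : Finset ℕ+) : ltPairs ∅ Y = 0 := sum_empty

lemma ltPairs_empty_right (X : Finset ℕ+) : ltPairs X ∅ = 0 := by
  simp [ltPairs, rho]

lemma ltPairs_insert_left {j : ℕ+} {X : Finset ℕ+} (h : j ∉ X) (Y : Finset ℕ+) :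
    ltPairs (insert j X) Y = rho j Y + ltPairs X Y :=
  sum_insert h

lemma ltPairs_union_right (X : Finset ℕ+) {Y Z : Finset ℕ+} (h : Disjoint Y Z) :
    ltPairs X (Y ∪ Z) = ltPairs X Y + ltPairs X Z := by
  simp only [ltPairs, rho_union h, sum_add_distrib]

lemma ltPairs_insert_right {j : ℕ+} {X : Finset ℕ+} (h : ∀ k ∈ X, j ≤ k) (Y : Finset ℕ+) :
    ltPairs X (insert j Y) = ltPairs X Y :=
  sum_congr rfl fun k hk => rho_insert_of_le (h k hk) Y

lemma ltPairs_sdiff_insert {j : ℕ+} {X : Finset ℕ+} (h : ∀ k ∈ X, j ≤ k) (S F : Finset ℕ+) :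
    ltPairs X (S \ insert j F) = ltPairs X (S \ F) :=
  sum_congr rfl fun k hk => rho_sdiff_insert_of_le (h k hk) S F

lemma ltPairs_add_ltPairs {X Y : Finset ℕ+} (h : Disjoint X Y) :
    ltPairs X Y + ltPairs Y X = #X * #Y := by
  simp only [ltPairs, rho, card_filter]
  rw [sum_comm (s := Y), ← sum_add_distrib, card_eq_sum_ones X, sum_mul, one_mul]
  refine sum_congr rfl fun x hx => ?_
  rw [← sum_add_distrib, card_eq_sum_ones]
  refine sum_congr rfl fun y hy => ?_
  have hxy : x ≠ y := fun hxy => disjoint_left.mp h hx (hxy ▸ hy)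
  rcases hxy.lt_or_gt with hlt | hlt <;> simp [hlt, hlt.not_gt]

lemma union_sdiff_sdiff_of_subset {P K E : Finset ℕ+} (hPK : Disjoint P K) (hEK : E ⊆ K) :
    (P ∪ K) \ (K \ E) = P ∪ E := by
  rw [union_sdiff_distrib, sdiff_eq_self_of_disjoint (hPK.mono_right sdiff_subset),
    Finset.sdiff_sdiff_eq_self hEK]

lemma union_sdiff_of_subset {Q K E : Finset ℕ+} (hQK : Disjoint Q K) (hEK : E ⊆ K) :
    (Q ∪ K) \ E = Q ∪ (K \ E) := by
  rw [union_sdiff_distrib, sdiff_eq_self_of_disjoint (hQK.mono_right hEK)]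

/-- The sign exponent of `W_{S \ F} ⊗ W_{S' \ E}` in `V̄_{F ∪ E} (W_S ⊗ W_{S'})`: the Koszul sign
of contracting `V_F` into the left factor and `V_E` into the right one. -/
def koszulExp (m : ℕ) (S S' F E : Finset ℕ+) : ℕ :=
  ltPairs F (S \ F) + #E * (1 + (m - #S)) + ltPairs E F + ltPairs E (S' \ E)

lemma koszulExp_insert_left (m : ℕ) (S S' : Finset ℕ+) {j : ℕ+} {F E : Finset ℕ+} (hjF : j ∉ F)
    (hF : ∀ k ∈ F, j < k) (hE : ∀ k ∈ E, j < k) :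
    koszulExp m S S' (insert j F) E = koszulExp m S S' F E + rho j (S \ insert j F) := by
  rw [koszulExp, koszulExp, ltPairs_insert_left hjF,
    ltPairs_sdiff_insert (fun k hk => (hF k hk).le),
    ltPairs_insert_right (fun k hk => (hE k hk).le)]
  ring

lemma koszulExp_insert_right (m : ℕ) (S S' : Finset ℕ+) {j : ℕ+} {F E : Finset ℕ+} (hjE : j ∉ E)
    (hF : ∀ k ∈ F, j < k) (hE : ∀ k ∈ E, j < k) :
    koszulExp m S S' F (insert j E)
      = koszulExp m S S' F E + (1 + (m - #S + #F) + rho j (S' \ insert j E)) := by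
  rw [koszulExp, koszulExp, card_insert_of_notMem hjE, ltPairs_insert_left hjE,
    ltPairs_insert_left hjE, rho_eq_card hF, ltPairs_sdiff_insert (fun k hk => (hE k hk).le)]
  ring

def vbarTripleExp (m : ℕ) (D₁ D₂ D₃ E : Finset ℕ+) : ℕ :=
  koszulExp m (D₁ ∪ D₃) (D₂ ∪ D₃) (D₃ \ E) E
    + (#D₂ * (1 + (m - #(D₁ ∪ E))) + ltPairs D₂ (D₃ \ E)) + ltPairs D₁ E

def vbarTripleExpSwap (m : ℕ) (D₁ D₂ D₃ E : Finset ℕ+) : ℕ :=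
  koszulExp m (D₂ ∪ D₃) (D₁ ∪ D₃) (D₃ \ E) E
    + ltPairs D₂ E + (#D₁ * (1 + (m - #E)) + ltPairs D₁ (D₃ \ E))

lemma even_vbarTripleExp_add {m : ℕ} {D₁ D₂ D₃ E : Finset ℕ+}
    (h13 : Disjoint D₁ D₃) (h23 : Disjoint D₂ D₃) (hE : E ⊆ D₃) (hA : #(D₁ ∪ D₃) ≤ m)
    (hB : #(D₂ ∪ D₃) ≤ m) :
    Even (vbarTripleExp m D₁ D₂ D₃ E + ((m - #(D₁ ∪ D₃)) * (m - #(D₂ ∪ D₃))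
      + vbarTripleExpSwap m D₁ D₂ D₃ E) + (#D₁ + #D₂ + #D₃ + m)) := by
  have h1E := h13.mono_right hE
  have h2E := h23.mono_right hE
  have h1C := h13.mono_right (sdiff_subset (s := D₃) (t := E))
  have h2C := h23.mono_right (sdiff_subset (s := D₃) (t := E))
  simp only [vbarTripleExp, vbarTripleExpSwap, koszulExp, union_sdiff_sdiff_of_subset h13 hE,
    union_sdiff_of_subset h23 hE, union_sdiff_sdiff_of_subset h23 hE,
    union_sdiff_of_subset h13 hE, ltPairs_union_right _ h1E, ltPairs_union_right _ h2E,
    ltPairs_union_right _ h1C, ltPairs_union_right _ h2C, card_union_of_disjoint h13,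
    card_union_of_disjoint h23, card_union_of_disjoint h1E]
  rw [card_union_of_disjoint h13] at hA
  rw [card_union_of_disjoint h23] at hB
  have hD₃ := card_sdiff_add_card_eq_card hE
  have hC1 := ltPairs_add_ltPairs h1C.symm
  have hC2 := ltPairs_add_ltPairs h2C.symm
  have hE1 := ltPairs_add_ltPairs h1E.symm
  have hE2 := ltPairs_add_ltPairs h2E.symm
  have hEC := ltPairs_add_ltPairs (disjoint_sdiff (s := E) (t := D₃))
  generalize D₃ \ E = C at *
  obtain ⟨α, rfl⟩ : ∃ α, m = #D₁ + #D₃ + α := ⟨m - (#D₁ + #D₃), by omega⟩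
  obtain ⟨β, hβ⟩ : ∃ β, #D₁ + α = #D₂ + β := ⟨#D₁ + α - #D₂, by omega⟩
  have e1 : #D₁ + #D₃ + α - (#D₁ + #D₃) = α := by omega
  have e2 : #D₁ + #D₃ + α - (#D₂ + #D₃) = β := by omega
  have e3 : #D₁ + #D₃ + α - (#D₁ + #E) = #C + α := by omega
  have e4 : #D₁ + #D₃ + α - #E = #D₁ + #C + α := by omega
  rw [e1, e2, e3, e4, ← hD₃, ← ZMod.natCast_eq_zero_iff_even]
  apply_fun (Nat.cast : ℕ → ZMod 2) at hC1 hC2 hE1 hE2 hEC hβ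
  push_cast at hC1 hC2 hE1 hE2 hEC hβ ⊢
  -- modulo 2, each pair of opposite inversion counts sums to a product of cards, and `x ^ 2 = x`
  have h2 : (2 : ZMod 2) = 0 := rfl
  linear_combination hC1 + hC2 + hE1 + hE2 + 2 * hEC - ((#E : ZMod 2) + α) * hβ
    + ZMod.pow_card (#D₁ : ZMod 2) + ZMod.pow_card (α : ZMod 2)
    + ((#C : ZMod 2) * #D₁ + #C * #D₂ + #E * #D₁ + #E * #C + 2 * #E + #E * α + #D₂ + 2 * #D₁
      + #D₁ * α + #C + α + ltPairs E C) * h2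

end Combinatorics

lemma one_add_neg_one_pow_ne_zero_iff (k : ℕ) : 1 + (-1 : ℚ) ^ k ≠ 0 ↔ Even k := by
  rcases k.even_or_odd with hk | hk
  · simp [hk, hk.neg_one_pow]
  · simp [Nat.not_even_iff_odd.mpr hk, hk.neg_one_pow]

section Subgees

variable {𝒢 : Finset (Finset ℕ+)}

lemma MLE.mono {S' S T : Multiset ℕ+} (h : S' ≤ S) (hST : MLE S T) : MLE S' T := by
  obtain ⟨T', hT', hrel⟩ := hST
  obtain ⟨U, rfl⟩ := Multiset.le_iff_exists_add.mp h
  obtain ⟨T₁, T₂, h₁, -, rfl⟩ := Multiset.rel_add_left.mp hrel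
  exact ⟨T₁, (Multiset.le_add_right _ _).trans hT', h₁⟩

lemma Subgee.mono {S T : Finset ℕ+} (hTS : T ⊆ S) (h : Subgee 𝒢 S) : Subgee 𝒢 T := by
  obtain ⟨G, hG, hSG⟩ := h
  exact ⟨G, hG, hSG.mono (val_le_iff.mpr hTS)⟩

lemma Subgee.card_le {m : ℕ} (hcard : ∀ G ∈ 𝒢, G.card ≤ m - 1) {S : Finset ℕ+}
    (h : Subgee 𝒢 S) : #S ≤ m := by
  obtain ⟨G, hG, T', hT', hrel⟩ := h
  calc #S = Multiset.card T' := Multiset.card_eq_card_of_rel hrel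
    _ ≤ #G := Multiset.card_le_card hT'
    _ ≤ m := (hcard G hG).trans (Nat.sub_le m 1)

lemma Subgee.coe_le {n : ℕ} (hsub : ∀ G ∈ 𝒢, G ⊆ bra (n - 1)) {S : Finset ℕ+}
    (h : Subgee 𝒢 S) {i : ℕ+} (hi : i ∈ S) : (i : ℕ) ≤ n - 1 := by
  obtain ⟨G, hG, T', hT', hrel⟩ := h
  obtain ⟨t, ht, hit⟩ := Multiset.exists_mem_of_rel_of_mem hrel hi
  obtain ⟨k, hk, rfl⟩ := mem_image.mp (hsub G hG (Multiset.mem_of_le hT' ht))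
  have : (i : ℕ) ≤ k + 1 := hit
  simp only [mem_range] at hk
  omega

end Subgees

section GradedTensor

variable {R : Type} [Ring R] [Algebra ℚ R] (𝒜 : ℕ → Submodule ℚ R) [GradedAlgebra 𝒜]

lemma tm_smul_left (c : ℚ) (x y : R) : tm 𝒜 (c • x) y = c • tm 𝒜 x y := by
  rw [tm, ← TensorProduct.smul_tmul', map_smul, tm]

lemma tm_smul_right (c : ℚ) (x y : R) : tm 𝒜 x (c • y) = c • tm 𝒜 x y := by
  rw [tm, TensorProduct.tmul_smul, map_smul, tm]

lemma tm_zero_left (y : R) : tm 𝒜 0 y = 0 := by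
  rw [tm, TensorProduct.zero_tmul, map_zero]

lemma tm_zero_right (x : R) : tm 𝒜 x 0 = 0 := by
  rw [tm, TensorProduct.tmul_zero, map_zero]

lemma tm_mul_tm {p q : ℕ} (a d : R) {b c : R} (hb : b ∈ 𝒜 p) (hc : c ∈ 𝒜 q) :
    tm 𝒜 a b * tm 𝒜 c d = (-1 : ℚ) ^ (p * q) • tm 𝒜 (a * c) (b * d) := by
  have h := GradedTensorProduct.tmul_coe_mul_coe_tmul 𝒜 𝒜 a (⟨b, hb⟩ : 𝒜 p) (⟨c, hc⟩ : 𝒜 q) d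
  rwa [Units.smul_def, Units.val_pow_eq_pow_val, Units.val_neg, Units.val_one,
    ← Int.cast_smul_eq_zsmul ℚ, Int.cast_pow, Int.cast_neg, Int.cast_one] at h

lemma ubar_mul_tm {p q : ℕ} {u x : R} (hu : u ∈ 𝒜 p) (hx : x ∈ 𝒜 q) (y : R) :
    ubar 𝒜 u * tm 𝒜 x y = tm 𝒜 (u * x) y - (-1 : ℚ) ^ (p * q) • tm 𝒜 x (u * y) := by
  rw [ubar, sub_mul, tm_mul_tm 𝒜 u y (SetLike.one_mem_graded 𝒜) hx, tm_mul_tm 𝒜 1 y hu hx]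
  simp only [zero_mul, pow_zero, one_smul, one_mul]

lemma ubar_mul_ubar {p q : ℕ} {x y : R} (hx : x ∈ 𝒜 p) (hy : y ∈ 𝒜 q) (hxy : x * y = 0) :
    ubar 𝒜 x * ubar 𝒜 y = -tm 𝒜 x y - (-1 : ℚ) ^ (p * q) • tm 𝒜 y x := by
  rw [ubar, ubar, mul_sub, sub_mul, sub_mul, tm_mul_tm 𝒜 x 1 (SetLike.one_mem_graded 𝒜) hy,
    tm_mul_tm 𝒜 x y (SetLike.one_mem_graded 𝒜) (SetLike.one_mem_graded 𝒜),
    tm_mul_tm 𝒜 1 1 hx hy, tm_mul_tm 𝒜 1 y hx (SetLike.one_mem_graded 𝒜), hxy]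
  simp only [zero_mul, mul_zero, pow_zero, one_smul, one_mul, mul_one, tm_zero_left,
    tm_zero_right, smul_zero]
  abel

end GradedTensor

section WDiff

variable {M : Type*} [Zero M] {W : Finset ℕ+ → M}

/-- With no exotic products, `V_F W_S = ± wDiff W S F`. -/
def wDiff (W : Finset ℕ+ → M) (S F : Finset ℕ+) : M := if F ⊆ S then W (S \ F) else 0

lemma wDiff_of_subset {S F : Finset ℕ+} (h : F ⊆ S) : wDiff W S F = W (S \ F) := if_pos h

lemma wDiff_of_not_subset {S F : Finset ℕ+} (h : ¬F ⊆ S) : wDiff W S F = 0 := if_neg h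

lemma wDiff_empty (S : Finset ℕ+) : wDiff W S ∅ = W S := by
  rw [wDiff_of_subset (empty_subset S), sdiff_empty]

end WDiff

section PolygonAlgebra

variable {n m : ℕ} {𝒢 : Finset (Finset ℕ+)} {R : Type} [Ring R] [Algebra ℚ R]
  {V : ℕ+ → R} {W : Finset ℕ+ → R}

lemma NoExoticProducts.V_mul_wDiff (hne : NoExoticProducts n 𝒢 V W) {j : ℕ+}
    (hj : (j : ℕ) ≤ n - 1) {S F : Finset ℕ+} (hS : Subgee 𝒢 S) (hjF : j ∉ F) :
    V j * wDiff W S F = (-1 : ℚ) ^ rho j (S \ insert j F) • wDiff W S (insert j F) := by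
  by_cases hFS : F ⊆ S
  · have hSF : Subgee 𝒢 (S \ F) := hS.mono sdiff_subset
    rw [wDiff_of_subset hFS]
    by_cases hjS : j ∈ S
    · rw [wDiff_of_subset (insert_subset hjS hFS), (hne.2 j hj _ hSF).1 (mem_sdiff.mpr ⟨hjS, hjF⟩),
        sdiff_insert]
    · rw [(hne.2 j hj _ hSF).2 fun h => hjS (mem_sdiff.mp h).1,
        wDiff_of_not_subset fun h => hjS (h (mem_insert_self j F)), smul_zero]
  · rw [wDiff_of_not_subset hFS, wDiff_of_not_subset fun h => hFS ((subset_insert j F).trans h),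
      mul_zero, smul_zero]

variable [FiniteDimensional ℚ R] {𝒜 : ℕ → Submodule ℚ R} [GradedAlgebra 𝒜]

namespace IsPolygonAlgebra

lemma wDiff_mem (hpa : IsPolygonAlgebra n m 𝒢 R 𝒜 V W) {S : Finset ℕ+}
    (hS : Subgee 𝒢 S) (F : Finset ℕ+) : wDiff W S F ∈ 𝒜 (m - #S + #F) := by
  by_cases hFS : F ⊆ S
  · have hcard : m - #(S \ F) = m - #S + #F := by
      have := card_le_card hFS
      have := hS.card_le hpa.gee_card
      rw [card_sdiff_of_subset hFS]
      omega
    rw [wDiff_of_subset hFS, ← hcard]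
    exact hpa.W_mem _ (hS.mono sdiff_subset)
  · rw [wDiff_of_not_subset hFS]
    exact zero_mem _

lemma ubar_V_mul_tm_wDiff (hpa : IsPolygonAlgebra n m 𝒢 R 𝒜 V W)
    (hne : NoExoticProducts n 𝒢 V W) {j : ℕ+} (hj : (j : ℕ) ≤ n - 1) {S S' F E : Finset ℕ+}
    (hS : Subgee 𝒢 S) (hS' : Subgee 𝒢 S') (hjF : j ∉ F) (hjE : j ∉ E) :
    ubar 𝒜 (V j) * tm 𝒜 (wDiff W S F) (wDiff W S' E)
      = (-1 : ℚ) ^ rho j (S \ insert j F) • tm 𝒜 (wDiff W S (insert j F)) (wDiff W S' E)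
        + (-1 : ℚ) ^ (1 + (m - #S + #F) + rho j (S' \ insert j E))
          • tm 𝒜 (wDiff W S F) (wDiff W S' (insert j E)) := by
  rw [ubar_mul_tm 𝒜 (hpa.V_mem j hj) (hpa.wDiff_mem hS F), hne.V_mul_wDiff hj hS hjF,
    hne.V_mul_wDiff hj hS' hjE, tm_smul_left, tm_smul_right, smul_smul, sub_eq_add_neg,
    ← neg_smul, one_mul]
  congr 2
  ring

lemma list_prod_ubar_mul_tm (hpa : IsPolygonAlgebra n m 𝒢 R 𝒜 V W)
    (hne : NoExoticProducts n 𝒢 V W) {S S' : Finset ℕ+} (hS : Subgee 𝒢 S)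
    (hS' : Subgee 𝒢 S') :
    ∀ L : List ℕ+, L.Pairwise (· < ·) → (∀ j ∈ L, (j : ℕ) ≤ n - 1) →
      (L.map fun i => ubar 𝒜 (V i)).prod * tm 𝒜 (W S) (W S')
        = ∑ E ∈ L.toFinset.powerset, (-1 : ℚ) ^ koszulExp m S S' (L.toFinset \ E) E
            • tm 𝒜 (wDiff W S (L.toFinset \ E)) (wDiff W S' E)
  | [], _, _ => by
    simp [koszulExp, ltPairs_empty_left, ltPairs_empty_right, wDiff_empty]
  | j :: L, hL, hLn => by
    obtain ⟨hjL, hL⟩ := List.pairwise_cons.mp hL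
    have hlt : ∀ k ∈ L.toFinset, j < k := fun k hk => hjL k (List.mem_toFinset.mp hk)
    have hjK : j ∉ L.toFinset := fun h => lt_irrefl j (hlt j h)
    rw [List.map_cons, List.prod_cons, mul_assoc, list_prod_ubar_mul_tm hpa hne hS hS' L hL
      (fun k hk => hLn k (List.mem_cons_of_mem j hk)), mul_sum, List.toFinset_cons,
      sum_powerset_insert hjK, ← sum_add_distrib]
    -- `j` is below every index contracted so far, so contracting it leaves their signs alone
    refine sum_congr rfl fun E hE => ?_
    have hEK : E ⊆ L.toFinset := mem_powerset.mp hE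
    have hjE : j ∉ E := fun h => hjK (hEK h)
    have hltF : ∀ k ∈ L.toFinset \ E, j < k := fun k hk => hlt k (mem_sdiff.mp hk).1
    have hltE : ∀ k ∈ E, j < k := fun k hk => hlt k (hEK hk)
    rw [mul_smul_comm, hpa.ubar_V_mul_tm_wDiff hne (hLn j List.mem_cons_self) hS hS'
        (fun h => hjK (mem_sdiff.mp h).1) hjE, smul_add, smul_smul, smul_smul, ← pow_add,
      ← pow_add, insert_sdiff_of_notMem _ hjE, insert_sdiff_insert, sdiff_insert_of_notMem hjK,
      koszulExp_insert_left m S S' (fun h => hjK (mem_sdiff.mp h).1) hltF hltE,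
      koszulExp_insert_right m S S' hjE hltF hltE]

lemma Vbar_mul_tm (hpa : IsPolygonAlgebra n m 𝒢 R 𝒜 V W) (hne : NoExoticProducts n 𝒢 V W)
    {S S' D : Finset ℕ+} (hS : Subgee 𝒢 S) (hS' : Subgee 𝒢 S')
    (hD : ∀ j ∈ D, (j : ℕ) ≤ n - 1) :
    Vbar 𝒜 V D * tm 𝒜 (W S) (W S')
      = ∑ E ∈ D.powerset, (-1 : ℚ) ^ koszulExp m S S' (D \ E) E
          • tm 𝒜 (wDiff W S (D \ E)) (wDiff W S' E) := by
  have h := hpa.list_prod_ubar_mul_tm hne hS hS' (D.sort (· ≤ ·)) (sortedLT_sort D).pairwise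
    fun j hj => hD j ((mem_sort _).mp hj)
  rwa [sort_toFinset] at h

lemma Vbar_mul_tm_union_left (hpa : IsPolygonAlgebra n m 𝒢 R 𝒜 V W)
    (hne : NoExoticProducts n 𝒢 V W) {X P T : Finset ℕ+} (hXP : Disjoint X P)
    (hXT : Disjoint X T) (hS : Subgee 𝒢 (X ∪ P)) (hT : Subgee 𝒢 T) :
    Vbar 𝒜 V X * tm 𝒜 (W (X ∪ P)) (W T) = (-1 : ℚ) ^ ltPairs X P • tm 𝒜 (W P) (W T) := by
  rw [hpa.Vbar_mul_tm hne hS hT fun j hj => hS.coe_le hpa.gee_sub (mem_union_left P hj),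
    sum_eq_single_of_mem ∅ (empty_mem_powerset X)]
  · rw [sdiff_empty, wDiff_of_subset subset_union_left, union_sdiff_cancel_left hXP, wDiff_empty]
    simp only [koszulExp, union_sdiff_cancel_left hXP, card_empty, zero_mul, ltPairs_empty_left,
      add_zero]
  · intro E hE hE0
    obtain ⟨x, hx⟩ := nonempty_iff_ne_empty.mpr hE0
    rw [wDiff_of_not_subset fun hET => disjoint_left.mp hXT (mem_powerset.mp hE hx) (hET hx),
      tm_zero_right, smul_zero]

lemma Vbar_mul_tm_union_right (hpa : IsPolygonAlgebra n m 𝒢 R 𝒜 V W)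
    (hne : NoExoticProducts n 𝒢 V W) {X P T : Finset ℕ+} (hXP : Disjoint X P)
    (hXT : Disjoint X T) (hP : Subgee 𝒢 P) (hS' : Subgee 𝒢 (X ∪ T)) :
    Vbar 𝒜 V X * tm 𝒜 (W P) (W (X ∪ T))
      = (-1 : ℚ) ^ (#X * (1 + (m - #P)) + ltPairs X T) • tm 𝒜 (W P) (W T) := by
  rw [hpa.Vbar_mul_tm hne hP hS' fun j hj => hS'.coe_le hpa.gee_sub (mem_union_left T hj),
    sum_eq_single_of_mem X (mem_powerset_self X)]
  · rw [Finset.sdiff_self, wDiff_empty, wDiff_of_subset subset_union_left,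
      union_sdiff_cancel_left hXT]
    simp only [koszulExp, ltPairs_empty_left, ltPairs_empty_right, union_sdiff_cancel_left hXT,
      zero_add, add_zero]
  · intro E hE hEX
    obtain ⟨x, hx⟩ := sdiff_nonempty.mpr fun hXE => hEX (subset_antisymm (mem_powerset.mp hE) hXE)
    rw [wDiff_of_not_subset fun hP => disjoint_left.mp hXP (mem_sdiff.mp hx).1 (hP hx),
      tm_zero_left, smul_zero]

lemma Vbar_mul_tm_union_union (hpa : IsPolygonAlgebra n m 𝒢 R 𝒜 V W)
    (hne : NoExoticProducts n 𝒢 V W) {P Q K : Finset ℕ+} (hPK : Disjoint P K)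
    (hQK : Disjoint Q K) (hS : Subgee 𝒢 (P ∪ K)) (hS' : Subgee 𝒢 (Q ∪ K)) :
    Vbar 𝒜 V K * tm 𝒜 (W (P ∪ K)) (W (Q ∪ K))
      = ∑ E ∈ K.powerset, (-1 : ℚ) ^ koszulExp m (P ∪ K) (Q ∪ K) (K \ E) E
          • tm 𝒜 (W (P ∪ E)) (W (Q ∪ (K \ E))) := by
  rw [hpa.Vbar_mul_tm hne hS hS' fun j hj => hS.coe_le hpa.gee_sub (mem_union_right P hj)]
  refine sum_congr rfl fun E hE => ?_
  have hEK := mem_powerset.mp hE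
  rw [wDiff_of_subset (sdiff_subset.trans subset_union_right),
    wDiff_of_subset (hEK.trans subset_union_right), union_sdiff_sdiff_of_subset hPK hEK,
    union_sdiff_of_subset hQK hEK]

lemma Vbar_triple_mul_tm (hpa : IsPolygonAlgebra n m 𝒢 R 𝒜 V W)
    (hne : NoExoticProducts n 𝒢 V W) {D₁ D₂ D₃ : Finset ℕ+} (h12 : Disjoint D₁ D₂)
    (h13 : Disjoint D₁ D₃) (h23 : Disjoint D₂ D₃) (h1 : Subgee 𝒢 (D₁ ∪ D₃))
    (h2 : Subgee 𝒢 (D₂ ∪ D₃)) :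
    Vbar 𝒜 V D₁ * (Vbar 𝒜 V D₂ * (Vbar 𝒜 V D₃ * tm 𝒜 (W (D₁ ∪ D₃)) (W (D₂ ∪ D₃))))
      = ∑ E ∈ D₃.powerset,
          (-1 : ℚ) ^ vbarTripleExp m D₁ D₂ D₃ E • tm 𝒜 (W E) (W (D₃ \ E)) := by
  rw [hpa.Vbar_mul_tm_union_union hne h13 h23 h1 h2, mul_sum, mul_sum]
  refine sum_congr rfl fun E hE => ?_
  have hEK := mem_powerset.mp hE
  have h1E : Subgee 𝒢 (D₁ ∪ E) := h1.mono (union_subset_union_right hEK)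
  rw [mul_smul_comm, mul_smul_comm,
    hpa.Vbar_mul_tm_union_right hne (disjoint_union_right.mpr ⟨h12.symm, h23.mono_right hEK⟩)
      (h23.mono_right sdiff_subset) h1E (h2.mono (union_subset_union_right sdiff_subset)),
    mul_smul_comm, hpa.Vbar_mul_tm_union_left hne (h13.mono_right hEK)
      (h13.mono_right sdiff_subset) h1E (h2.mono (sdiff_subset.trans subset_union_right)),
    smul_smul, smul_smul, ← pow_add, ← pow_add, vbarTripleExp]

lemma Vbar_triple_mul_tm_swap (hpa : IsPolygonAlgebra n m 𝒢 R 𝒜 V W)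
    (hne : NoExoticProducts n 𝒢 V W) {D₁ D₂ D₃ : Finset ℕ+} (h12 : Disjoint D₁ D₂)
    (h13 : Disjoint D₁ D₃) (h23 : Disjoint D₂ D₃) (h1 : Subgee 𝒢 (D₁ ∪ D₃))
    (h2 : Subgee 𝒢 (D₂ ∪ D₃)) :
    Vbar 𝒜 V D₁ * (Vbar 𝒜 V D₂ * (Vbar 𝒜 V D₃ * tm 𝒜 (W (D₂ ∪ D₃)) (W (D₁ ∪ D₃))))
      = ∑ E ∈ D₃.powerset,
          (-1 : ℚ) ^ vbarTripleExpSwap m D₁ D₂ D₃ E • tm 𝒜 (W E) (W (D₃ \ E)) := by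
  rw [hpa.Vbar_mul_tm_union_union hne h23 h13 h2 h1, mul_sum, mul_sum]
  refine sum_congr rfl fun E hE => ?_
  have hEK := mem_powerset.mp hE
  have h1C : Subgee 𝒢 (D₁ ∪ (D₃ \ E)) := h1.mono (union_subset_union_right sdiff_subset)
  rw [mul_smul_comm, mul_smul_comm,
    hpa.Vbar_mul_tm_union_left hne (h23.mono_right hEK)
      (disjoint_union_right.mpr ⟨h12.symm, h23.mono_right sdiff_subset⟩)
      (h2.mono (union_subset_union_right hEK)) h1C,
    mul_smul_comm, hpa.Vbar_mul_tm_union_right hne (h13.mono_right hEK)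
      (h13.mono_right sdiff_subset) (h2.mono (hEK.trans subset_union_right)) h1C,
    smul_smul, smul_smul, ← pow_add, ← pow_add, vbarTripleExpSwap]

lemma Vbar_triple_mul_ubar_mul_ubar (hpa : IsPolygonAlgebra n m 𝒢 R 𝒜 V W)
    (hne : NoExoticProducts n 𝒢 V W) {D₁ D₂ D₃ : Finset ℕ+} (h12 : Disjoint D₁ D₂)
    (h13 : Disjoint D₁ D₃) (h23 : Disjoint D₂ D₃) (h1 : Subgee 𝒢 (D₁ ∪ D₃))
    (h2 : Subgee 𝒢 (D₂ ∪ D₃)) :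
    Vbar 𝒜 V D₁ * Vbar 𝒜 V D₂ * Vbar 𝒜 V D₃ * ubar 𝒜 (W (D₁ ∪ D₃)) * ubar 𝒜 (W (D₂ ∪ D₃))
      = (-(1 + (-1 : ℚ) ^ (#D₁ + #D₂ + #D₃ + m))) • ∑ E ∈ D₃.powerset,
          (-1 : ℚ) ^ vbarTripleExp m D₁ D₂ D₃ E • tm 𝒜 (W E) (W (D₃ \ E)) := by
  rw [mul_assoc _ (ubar 𝒜 _), ubar_mul_ubar 𝒜 (hpa.W_mem _ h1) (hpa.W_mem _ h2) (hne.1 _ _ h1 h2),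
    mul_sub, mul_neg, mul_smul_comm]
  simp only [mul_assoc]
  rw [hpa.Vbar_triple_mul_tm hne h12 h13 h23 h1 h2,
    hpa.Vbar_triple_mul_tm_swap hne h12 h13 h23 h1 h2, smul_sum, smul_sum, ← sum_neg_distrib,
    ← sum_sub_distrib]
  refine sum_congr rfl fun E hE => ?_
  have hsign : (-1 : ℚ) ^ ((m - #(D₁ ∪ D₃)) * (m - #(D₂ ∪ D₃)))
        * (-1) ^ vbarTripleExpSwap m D₁ D₂ D₃ E
      = (-1) ^ (#D₁ + #D₂ + #D₃ + m) * (-1) ^ vbarTripleExp m D₁ D₂ D₃ E := by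
    rw [← pow_add, ← pow_add]
    refine neg_one_pow_congr (Nat.even_add.mp ?_)
    convert even_vbarTripleExp_add h13 h23 (mem_powerset.mp hE) (h1.card_le hpa.gee_card)
      (h2.card_le hpa.gee_card) using 1
    ring
  rw [smul_smul, smul_smul, hsign, ← neg_smul, ← sub_smul]
  congr 1
  ring

lemma exists_coord_tm (hpa : IsPolygonAlgebra n m 𝒢 R 𝒜 V W) {T T' : Finset ℕ+}
    (hT : Subgee 𝒢 T) (hT' : Subgee 𝒢 T') :
    ∃ φ : (𝒜 ᵍ⊗[ℚ] 𝒜) →ₗ[ℚ] ℚ, ∀ S S' : Finset ℕ+, Subgee 𝒢 S → Subgee 𝒢 S' →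
      φ (tm 𝒜 (W S) (W S')) = if S = T ∧ S' = T' then 1 else 0 := by
  let b := Module.Basis.mk hpa.basis_indep hpa.basis_span.ge
  let bb := (b.tensorProduct b).map (GradedTensorProduct.of ℚ 𝒜 𝒜)
  refine ⟨bb.coord (Sum.inr ⟨T, hT⟩, Sum.inr ⟨T', hT'⟩), fun S S' hS hS' => ?_⟩
  have hbb : tm 𝒜 (W S) (W S') = bb (Sum.inr ⟨S, hS⟩, Sum.inr ⟨S', hS'⟩) := by
    rw [Module.Basis.map_apply, Module.Basis.tensorProduct_apply, Module.Basis.mk_apply,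
      Module.Basis.mk_apply]
    rfl
  rw [hbb, Module.Basis.coord_apply, Module.Basis.repr_self, Finsupp.single_apply]
  simp only [Prod.mk.injEq, Sum.inr.injEq, Subtype.mk.injEq]

lemma sum_smul_tm_sdiff_ne_zero (hpa : IsPolygonAlgebra n m 𝒢 R 𝒜 V W) {D : Finset ℕ+}
    (hD : Subgee 𝒢 D) (f : Finset ℕ+ → ℕ) :
    ∑ E ∈ D.powerset, (-1 : ℚ) ^ f E • tm 𝒜 (W E) (W (D \ E)) ≠ 0 := by
  obtain ⟨φ, hφ⟩ := hpa.exists_coord_tm (hD.mono (empty_subset D)) hD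
  intro h0
  have h := congrArg φ h0
  rw [map_sum, map_zero, sum_eq_single_of_mem ∅ (empty_mem_powerset D)] at h
  · rw [map_smul, hφ _ _ (hD.mono (empty_subset D)) (hD.mono sdiff_subset), sdiff_empty] at h
    simp at h
  · intro E hE hE0
    rw [map_smul, hφ _ _ (hD.mono (mem_powerset.mp hE)) (hD.mono sdiff_subset), if_neg (by tauto),
      smul_zero]

end IsPolygonAlgebra

end PolygonAlgebra

/-- In an algebra of type `(𝒢, m, n)` with no exotic products, for pairwise disjoint sets
`D₁, D₂, D₃` with `D₁ ∪ D₃` and `D₂ ∪ D₃` subgees, the product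
`V̄_{D₁} V̄_{D₂} V̄_{D₃} · W̄_{D₁∪D₃} · W̄_{D₂∪D₃}` is nonzero iff
`|D₁| + |D₂| + |D₃| ≡ m (mod 2)`. -/
theorem stmt_11 (n m : ℕ) (𝒢 : Finset (Finset ℕ+))
    (R : Type) [Ring R] [Algebra ℚ R] [FiniteDimensional ℚ R]
    (𝒜 : ℕ → Submodule ℚ R) [GradedAlgebra 𝒜] (V : ℕ+ → R) (W : Finset ℕ+ → R)
    (h : IsPolygonAlgebra n m 𝒢 R 𝒜 V W)
    (hne : NoExoticProducts n 𝒢 V W)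
    (D₁ D₂ D₃ : Finset ℕ+)
    (h12 : Disjoint D₁ D₂) (h13 : Disjoint D₁ D₃) (h23 : Disjoint D₂ D₃)
    (h1 : Subgee 𝒢 (D₁ ∪ D₃)) (h2 : Subgee 𝒢 (D₂ ∪ D₃)) :
    Vbar 𝒜 V D₁ * Vbar 𝒜 V D₂ * Vbar 𝒜 V D₃ *
      ubar 𝒜 (W (D₁ ∪ D₃)) * ubar 𝒜 (W (D₂ ∪ D₃)) ≠ 0 ↔
    (D₁.card + D₂.card + D₃.card) % 2 = m % 2 := by
  rw [h.Vbar_triple_mul_ubar_mul_ubar hne h12 h13 h23 h1 h2,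
    smul_ne_zero_iff_left (h.sum_smul_tm_sdiff_ne_zero (h2.mono subset_union_right) _),
    neg_ne_zero, one_add_neg_one_pow_ne_zero_iff, Nat.even_add, Nat.even_iff, Nat.even_iff]
  omega
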